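/- arXiv:2503.07099 — 8 statements merged into one kernel-verified Lean document; each statement's English description precedes it below -/
import Mathlib

section
/- Let h1, h2 : ℤ⁴ → ℤ⁴ be the maps h1(k1,k2,q1,q2) = (k1+k2, k2, k2+q1−q2, q2) and h2(k1,k2,q1,q2) = (k2, k1, q2, q1). The smallest subset of ℤ⁴ that contains (1,1,0,0) and is closed under h1 and h2 is exactly the set D_P of integer quadruples (k1,k2,q1,q2) with k1 > 0, k2 > 0, 0 ≤ q1 < k1, 0 ≤ q2 < k2 and k1·k2 − k1·q2 − k2·q1 = 1. -/
/-!
The quantity `k1·k2 − k1·q2 − k2·q1` is invariant under `h1` and `h2`, and so are the inequalities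
defining `D_P`; hence `D_P` is one of the closed sets. Conversely, `h1⁻¹` is a step of the
subtractive Euclidean algorithm, `(k1, k2, q1, q2) ↦ (k1 − k2, k2, q1 − k2 + q2, q2)`, which keeps
`D_P` when `k1 > k2`; up to the swap `h2` this lowers `k1 + k2` until `k1 = k2`, and then the
invariant forces the quadruple to be `(1, 1, 0, 0)`.
-/

/-- The map `h1(k1,k2,q1,q2) = (k1+k2, k2, k2+q1−q2, q2)`. -/
def h1 : ℤ × ℤ × ℤ × ℤ → ℤ × ℤ × ℤ × ℤ :=
  fun s => (s.1 + s.2.1, s.2.1, s.2.1 + s.2.2.1 - s.2.2.2, s.2.2.2)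

/-- The map `h2(k1,k2,q1,q2) = (k2, k1, q2, q1)`. -/
def h2 : ℤ × ℤ × ℤ × ℤ → ℤ × ℤ × ℤ × ℤ :=
  fun s => (s.2.1, s.1, s.2.2.2, s.2.2.1)

/-- The set `D_P` of integer quadruples `(k1,k2,q1,q2)` with `k1 > 0`, `k2 > 0`,
    `0 ≤ q1 < k1`, `0 ≤ q2 < k2` and `k1·k2 − k1·q2 − k2·q1 = 1`. -/
def DP : Set (ℤ × ℤ × ℤ × ℤ) :=
  {s | 0 < s.1 ∧ 0 < s.2.1 ∧ 0 ≤ s.2.2.1 ∧ s.2.2.1 < s.1 ∧ 0 ≤ s.2.2.2 ∧ s.2.2.2 < s.2.1 ∧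
    s.1 * s.2.1 - s.1 * s.2.2.2 - s.2.1 * s.2.2.1 = 1}

theorem mem_DP {a b c d : ℤ} : (a, b, c, d) ∈ DP ↔
    0 < a ∧ 0 < b ∧ 0 ≤ c ∧ c < a ∧ 0 ≤ d ∧ d < b ∧ a * b - a * d - b * c = 1 :=
  Iff.rfl

theorem base_mem_DP : ((1, 1, 0, 0) : ℤ × ℤ × ℤ × ℤ) ∈ DP := by
  norm_num [mem_DP]

theorem h1_mem_DP {s : ℤ × ℤ × ℤ × ℤ} (hs : s ∈ DP) : h1 s ∈ DP := by
  obtain ⟨a, b, c, d⟩ := s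
  obtain ⟨ha, hb, hc₀, hca, hd₀, hdb, hdet⟩ := mem_DP.1 hs
  exact mem_DP.2 ⟨by linarith, hb, by linarith, by linarith, hd₀, hdb, by linear_combination hdet⟩

theorem h2_mem_DP {s : ℤ × ℤ × ℤ × ℤ} (hs : s ∈ DP) : h2 s ∈ DP := by
  obtain ⟨a, b, c, d⟩ := s
  obtain ⟨ha, hb, hc₀, hca, hd₀, hdb, hdet⟩ := mem_DP.1 hs
  exact mem_DP.2 ⟨hb, ha, hd₀, hdb, hc₀, hca, by linear_combination hdet⟩

theorem h1_sub (a b c d : ℤ) : h1 (a - b, b, c - b + d, d) = (a, b, c, d) := by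
  simp only [h1, sub_add_cancel, Prod.mk.injEq, true_and, and_true]
  ring

theorem sub_mem_DP {a b c d : ℤ} (h : (a, b, c, d) ∈ DP) (hba : b < a) :
    (a - b, b, c - b + d, d) ∈ DP := by
  obtain ⟨ha, hb, hc₀, hca, hd₀, hdb, hdet⟩ := mem_DP.1 h
  refine mem_DP.2 ⟨by linarith, hb, ?_, ?_, hd₀, hdb, by linear_combination hdet⟩
  · nlinarith [mul_nonneg (sub_nonneg.2 hba.le) hc₀, mul_nonneg ha.le (sub_nonneg.2 hdb.le)]
  · nlinarith [mul_nonneg (sub_nonneg.2 hba.le) hd₀]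

theorem eq_base_of_mem_DP_of_fst_eq_snd {a c d : ℤ} (h : (a, a, c, d) ∈ DP) :
    (a, a, c, d) = (1, 1, 0, 0) := by
  obtain ⟨ha, -, hc₀, hca, hd₀, hda, hdet⟩ := mem_DP.1 h
  have ha1 : a = 1 :=
    Int.eq_one_of_mul_eq_one_right (b := a - d - c) ha.le (by linear_combination hdet)
  subst ha1
  simp only [Prod.mk.injEq, true_and]
  omega

theorem mem_of_mem_DP {S : Set (ℤ × ℤ × ℤ × ℤ)} (hbase : (1, 1, 0, 0) ∈ S)
    (hS₁ : ∀ s ∈ S, h1 s ∈ S) (hS₂ : ∀ s ∈ S, h2 s ∈ S) (a b c d : ℤ) (h : (a, b, c, d) ∈ DP) :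
    (a, b, c, d) ∈ S := by
  obtain ⟨ha, hb, -⟩ := mem_DP.1 h
  rcases lt_trichotomy a b with hab | rfl | hba
  · have hpred : (b - a, a, d - a + c, c) ∈ S :=
      mem_of_mem_DP hbase hS₁ hS₂ _ _ _ _ (sub_mem_DP (h2_mem_DP h) hab)
    simpa only [h1_sub, h2] using hS₂ _ (hS₁ _ hpred)
  · rwa [eq_base_of_mem_DP_of_fst_eq_snd h]
  · have hpred : (a - b, b, c - b + d, d) ∈ S :=
      mem_of_mem_DP hbase hS₁ hS₂ _ _ _ _ (sub_mem_DP h hba)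
    simpa only [h1_sub] using hS₁ _ hpred
termination_by (a + b).toNat
decreasing_by all_goals omega

theorem stmt1 :
    ⋂₀ {S : Set (ℤ × ℤ × ℤ × ℤ) |
        (1, 1, 0, 0) ∈ S ∧ (∀ s ∈ S, h1 s ∈ S) ∧ (∀ s ∈ S, h2 s ∈ S)} = DP := by
  refine Set.Subset.antisymm
    (Set.sInter_subset_of_mem ⟨base_mem_DP, fun _ => h1_mem_DP, fun _ => h2_mem_DP⟩) ?_
  rintro ⟨a, b, c, d⟩ h S ⟨hbase, hS₁, hS₂⟩
  exact mem_of_mem_DP hbase hS₁ hS₂ a b c d h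
end

section
/- Let k1 and q1 be coprime integers with k1 > q1 ≥ 1. Then there exists a unique pair of integers (k2, q2) with 1 ≤ k2 < k1 and 0 ≤ q2 < k2 such that k1·k2 − k1·q2 − k2·q1 = 1. -/
/-!
Rewrite the equation as `k2 * (k1 - q1) - k1 * q2 = 1`. Since `k1 - q1` is coprime to `k1`, this
says that `k2` is the inverse of `k1 - q1` modulo `k1`, which has a unique representative in
`[0, k1)`; it is nonzero because `k1 > 1`, and then `q2` is determined by the equation. The bounds
`0 ≤ q2 < k2` follow from `0 < k1 - q1 < k1`.
-/

namespace Int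

theorem exists_dvd_mul_sub_one {m a : ℤ} (hm : 0 < m) (h : IsCoprime m a) :
    ∃ x, 0 ≤ x ∧ x < m ∧ m ∣ x * a - 1 := by
  obtain ⟨u, v, huv⟩ := h
  refine ⟨v % m, emod_nonneg v hm.ne', emod_lt_of_pos v hm, -u - v / m * a, ?_⟩
  linear_combination a * emod_add_mul_ediv v m + huv

theorem eq_of_dvd_mul_sub_one {m a x y : ℤ} (h : IsCoprime m a) (hx0 : 0 ≤ x) (hxm : x < m)
    (hy0 : 0 ≤ y) (hym : y < m) (hx : m ∣ x * a - 1) (hy : m ∣ y * a - 1) : x = y := by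
  have hxy : m ∣ (x - y) * a := by
    have := dvd_sub hx hy
    rwa [show x * a - 1 - (y * a - 1) = (x - y) * a by ring] at this
  exact sub_eq_zero.mp <|
    eq_zero_of_abs_lt_dvd (h.dvd_of_dvd_mul_right hxy) (abs_sub_lt_iff.mpr ⟨by omega, by omega⟩)

theorem existsUnique_mul_sub_mul_eq_one {m a : ℤ} (h : IsCoprime m a) (ha : 0 < a) (ham : a < m) :
    ∃! p : ℤ × ℤ, 1 ≤ p.1 ∧ p.1 < m ∧ 0 ≤ p.2 ∧ p.2 < p.1 ∧ p.1 * a - m * p.2 = 1 := by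
  obtain ⟨x, hx0, hxm, y, hy⟩ := exists_dvd_mul_sub_one (ha.trans ham) h
  have hx1 : 1 ≤ x := by
    rcases hx0.lt_or_eq with hx | rfl
    · exact hx
    · have : m ∣ 1 := ⟨-y, by linarith⟩
      have := le_of_dvd one_pos this
      omega
  refine ⟨(x, y), ⟨hx1, hxm, by nlinarith, by nlinarith, by linarith⟩, ?_⟩
  rintro ⟨c, d⟩ ⟨hc1, hcm, -, -, hcd⟩
  have hcx : c = x := eq_of_dvd_mul_sub_one h (by omega) hcm hx0 hxm ⟨d, by linarith⟩ ⟨y, hy⟩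
  subst hcx
  have hdy : d = y := mul_left_cancel₀ (ha.trans ham).ne' (by linarith)
  rw [hdy]

end Int

theorem stmt3 (k1 q1 : ℤ) (hcop : IsCoprime k1 q1) (hq1 : 1 ≤ q1) (hk1 : q1 < k1) :
    ∃! p : ℤ × ℤ, 1 ≤ p.1 ∧ p.1 < k1 ∧ 0 ≤ p.2 ∧ p.2 < p.1 ∧
      k1 * p.1 - k1 * p.2 - p.1 * q1 = 1 := by
  obtain ⟨u, v, huv⟩ := hcop
  have hcop' : IsCoprime k1 (k1 - q1) := ⟨u + v, -v, by linear_combination huv⟩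
  have key := Int.existsUnique_mul_sub_mul_eq_one hcop' (by omega) (by omega)
  refine (existsUnique_congr fun p => ?_).mp key
  constructor <;> rintro ⟨h1, h2, h3, h4, h5⟩ <;> exact ⟨h1, h2, h3, h4, by linear_combination h5⟩
end

section
/- If (k1,k2,q1,q2) is an integer quadruple with k1 > 0, k2 > 0, 0 ≤ q1 < k1, 0 ≤ q2 < k2, k1·k2 − k1·q2 − k2·q1 = 1, and k1 ≠ k2, then min(k1, k2) ≤ q1 + q2. -/
/-!
The equation reads `(k1 - q1) * (k2 - q2) - q1 * q2 = 1`. If `q1 + q2 < min k1 k2`, then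
`k1 - q1 > q2` and `k2 - q2 > q1`, so the left side is at least `q1 + q2 + 1`; hence
`q1 = q2 = 0`, and then `k1 * k2 = 1` forces `k1 = k2`.
-/

theorem Int.add_add_one_le_mul_sub_mul {a b c d : ℤ} (hc : 0 ≤ c) (hd : 0 ≤ d)
    (hca : c < a) (hdb : d < b) : c + d + 1 ≤ a * b - c * d := by
  have : (c + 1) * (d + 1) ≤ a * b := mul_le_mul hca hdb (by omega) (by omega)
  linarith

theorem stmt6_general (k1 k2 q1 q2 : ℤ)
    (hq1 : 0 ≤ q1) (hq2 : 0 ≤ q2)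
    (heq : k1 * k2 - k1 * q2 - k2 * q1 = 1) (hkk : k1 ≠ k2) :
    min k1 k2 ≤ q1 + q2 := by
  by_contra! h
  obtain ⟨h1, h2⟩ := lt_min_iff.mp h
  have hfactor : (k1 - q1) * (k2 - q2) - q2 * q1 = 1 := by linear_combination heq
  have hsum : q2 + q1 + 1 ≤ (k1 - q1) * (k2 - q2) - q2 * q1 :=
    Int.add_add_one_le_mul_sub_mul hq2 hq1 (by omega) (by omega)
  obtain ⟨rfl, rfl⟩ : q1 = 0 ∧ q2 = 0 := by omega
  have hunit : k1 * k2 = 1 := by simpa using heq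
  rcases Int.eq_one_or_neg_one_of_mul_eq_one' hunit with ⟨rfl, rfl⟩ | ⟨rfl, rfl⟩ <;>
    exact hkk rfl

theorem stmt6 (k1 k2 q1 q2 : ℤ) (hk1 : 0 < k1) (hk2 : 0 < k2)
    (hq1 : 0 ≤ q1) (hq1' : q1 < k1) (hq2 : 0 ≤ q2) (hq2' : q2 < k2)
    (heq : k1 * k2 - k1 * q2 - k2 * q1 = 1) (hkk : k1 ≠ k2) :
    min k1 k2 ≤ q1 + q2 :=
  stmt6_general k1 k2 q1 q2 hq1 hq2 heq hkk
end

section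
/- If (k1,k2,q1,q2) is an integer quadruple with k1 > k2 ≥ 1, 0 ≤ q1 < k1, 0 ≤ q2 < k2, and k1·k2 − k1·q2 − k2·q1 = 1, then k2 ≤ q1 + q2 and q1 + q2 < k1. -/
/-! Write the equation as `k1 (k2 - q2) - k2 q1 = 1`. If `q1 + q2 ≤ k2 - 1`, then `k2 q1 ≤ k2 (k2 - 1 - q2)`
and the left side is at least `(k1 - k2)(k2 - q2) + k2 ≥ 2`. If `q1 + q2 ≥ k1`, then `k2 q1 ≥ k2 (k1 - q2)`
and the left side is at most `-(k1 - k2) q2 ≤ 0`. -/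

theorem Int.le_add_of_mul_sub_mul_sub_mul_eq_one {k1 k2 q1 q2 : ℤ} (hk2 : 0 < k2) (hk : k2 < k1)
    (hq2 : q2 < k2) (heq : k1 * k2 - k1 * q2 - k2 * q1 = 1) : k2 ≤ q1 + q2 := by
  by_contra! h
  have hq1 : k2 * q1 ≤ k2 * (k2 - 1 - q2) := mul_le_mul_of_nonneg_left (by omega) hk2.le
  have hpos : 0 < (k1 - k2) * (k2 - q2) := mul_pos (sub_pos.2 hk) (sub_pos.2 hq2)
  linarith

theorem add_lt_of_mul_sub_mul_sub_mul_eq_one {R : Type*} [CommRing R] [LinearOrder R]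
    [IsStrictOrderedRing R] {k1 k2 q1 q2 : R} (hk2 : 0 ≤ k2) (hk : k2 ≤ k1) (hq2 : 0 ≤ q2)
    (heq : k1 * k2 - k1 * q2 - k2 * q1 = 1) : q1 + q2 < k1 := by
  by_contra! h
  have hq1 : k2 * (k1 - q2) ≤ k2 * q1 := mul_le_mul_of_nonneg_left (by linarith) hk2
  have hnonneg : 0 ≤ (k1 - k2) * q2 := mul_nonneg (sub_nonneg.2 hk) hq2
  linarith

theorem stmt7_general (k1 k2 q1 q2 : ℤ) (hk2 : 1 ≤ k2) (hk1 : k2 < k1)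
    (hq2 : 0 ≤ q2) (hq2' : q2 < k2)
    (heq : k1 * k2 - k1 * q2 - k2 * q1 = 1) :
    k2 ≤ q1 + q2 ∧ q1 + q2 < k1 :=
  ⟨Int.le_add_of_mul_sub_mul_sub_mul_eq_one hk2 hk1 hq2' heq,
    add_lt_of_mul_sub_mul_sub_mul_eq_one (by omega) hk1.le hq2 heq⟩

theorem stmt7 (k1 k2 q1 q2 : ℤ) (hk2 : 1 ≤ k2) (hk1 : k2 < k1)
    (hq1 : 0 ≤ q1) (hq1' : q1 < k1) (hq2 : 0 ≤ q2) (hq2' : q2 < k2)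
    (heq : k1 * k2 - k1 * q2 - k2 * q1 = 1) :
    k2 ≤ q1 + q2 ∧ q1 + q2 < k1 :=
  stmt7_general k1 k2 q1 q2 hk2 hk1 hq2 hq2' heq
end

section
/- Let (k1,k2,q1,q2) be an integer quadruple with min(k1,k2) ≥ 2, 0 < q1 < k1, 0 < q2 < k2 and k1·k2 − k1·q2 − k2·q1 = 1, and let (a1,a2) be integers with 0 < a1 ≤ k1, 0 < a2 ≤ k2 and k1·a2 − k2·a1 = q1 − q2. Define q3 = a1 + a2 − 1, m1 = k2 − a2, m2 = k1 − a1, and q4 = k1·m1 + q1. Then: (i) q4 = k2·m2 + q2; (ii) k1·k2·(k1+k2) − k1·k2·q3 − q4·(k1+k2) = 1; (iii) m1 ≥ 0, m2 ≥ 0, 0 < q3 < k1 + k2, and 0 < q4 < k1·k2. -/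
/-! Writing `q4 * (k1 + k2) = k1 * (k2 * m2 + q2) + k2 * (k1 * m1 + q1)`, the cubic identity collapses
to `k1 * k2 - k1 * q2 - k2 * q1 = 1`; the bounds on `q4` come from `1 ≤ a2` and `q1 < k1`. -/

section CommRing

variable {R : Type*} [CommRing R]

theorem mul_sub_add_eq_mul_sub_add {k1 k2 q1 q2 a1 a2 : R}
    (h : k1 * a2 - k2 * a1 = q1 - q2) :
    k1 * (k2 - a2) + q1 = k2 * (k1 - a1) + q2 := by
  linear_combination -h

theorem mul_mul_add_sub_eq_of_mul_sub_mul {k1 k2 q1 q2 a1 a2 : R}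
    (h : k1 * a2 - k2 * a1 = q1 - q2) :
    k1 * k2 * (k1 + k2) - k1 * k2 * (a1 + a2 - 1) - (k1 * (k2 - a2) + q1) * (k1 + k2) =
      k1 * k2 - k1 * q2 - k2 * q1 := by
  linear_combination k1 * h

end CommRing

theorem mul_sub_add_mem_Ioo {R : Type*} [CommRing R] [LinearOrder R] [IsStrictOrderedRing R]
    {k1 k2 q1 a2 : R} (hq1 : 0 < q1) (hq1' : q1 < k1) (ha2 : 1 ≤ a2) (ha2' : a2 ≤ k2) :
    k1 * (k2 - a2) + q1 ∈ Set.Ioo 0 (k1 * k2) := by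
  have hk1 : 0 < k1 := hq1.trans hq1'
  constructor
  · have : 0 ≤ k1 * (k2 - a2) := mul_nonneg hk1.le (sub_nonneg.mpr ha2')
    linarith
  · have : k1 ≤ k1 * a2 := le_mul_of_one_le_right hk1.le ha2
    linarith

theorem stmt9_general (k1 k2 q1 q2 a1 a2 : ℤ)
    (hq1 : 0 < q1) (hq1' : q1 < k1)
    (heq : k1 * k2 - k1 * q2 - k2 * q1 = 1)
    (ha1 : 0 < a1) (ha1' : a1 ≤ k1) (ha2 : 0 < a2) (ha2' : a2 ≤ k2)
    (heq2 : k1 * a2 - k2 * a1 = q1 - q2)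
    (q3 m1 m2 q4 : ℤ)
    (hq3 : q3 = a1 + a2 - 1) (hm1 : m1 = k2 - a2) (hm2 : m2 = k1 - a1)
    (hq4 : q4 = k1 * m1 + q1) :
    q4 = k2 * m2 + q2 ∧
    k1 * k2 * (k1 + k2) - k1 * k2 * q3 - q4 * (k1 + k2) = 1 ∧
    0 ≤ m1 ∧ 0 ≤ m2 ∧ 0 < q3 ∧ q3 < k1 + k2 ∧ 0 < q4 ∧ q4 < k1 * k2 := by
  subst hq3 hm1 hm2 hq4
  obtain ⟨hq4_pos, hq4_lt⟩ := mul_sub_add_mem_Ioo hq1 hq1' (Order.one_le_iff_pos.mpr ha2) ha2'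
  exact ⟨mul_sub_add_eq_mul_sub_add heq2, (mul_mul_add_sub_eq_of_mul_sub_mul heq2).trans heq,
    sub_nonneg.mpr ha2', sub_nonneg.mpr ha1', by omega, by omega, hq4_pos, hq4_lt⟩

theorem stmt9 (k1 k2 q1 q2 a1 a2 : ℤ) (hmin : 2 ≤ min k1 k2)
    (hq1 : 0 < q1) (hq1' : q1 < k1) (hq2 : 0 < q2) (hq2' : q2 < k2)
    (heq : k1 * k2 - k1 * q2 - k2 * q1 = 1)
    (ha1 : 0 < a1) (ha1' : a1 ≤ k1) (ha2 : 0 < a2) (ha2' : a2 ≤ k2)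
    (heq2 : k1 * a2 - k2 * a1 = q1 - q2)
    (q3 m1 m2 q4 : ℤ)
    (hq3 : q3 = a1 + a2 - 1) (hm1 : m1 = k2 - a2) (hm2 : m2 = k1 - a1)
    (hq4 : q4 = k1 * m1 + q1) :
    q4 = k2 * m2 + q2 ∧
    k1 * k2 * (k1 + k2) - k1 * k2 * q3 - q4 * (k1 + k2) = 1 ∧
    0 ≤ m1 ∧ 0 ≤ m2 ∧ 0 < q3 ∧ q3 < k1 + k2 ∧ 0 < q4 ∧ q4 < k1 * k2 :=
  stmt9_general k1 k2 q1 q2 a1 a2 hq1 hq1' heq ha1 ha1' ha2 ha2' heq2 q3 m1 m2 q4 hq3 hm1 hm2 hq4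
end

section
/- Let (k1,k2,q1,q2) be an integer quadruple with min(k1,k2) ≥ 2, 0 < q1 < k1, 0 < q2 < k2, and k1·k2 − k1·q2 − k2·q1 = 1. Then there exists a unique quadruple of integers (q3,q4,m1,m2) with m1 ≥ 0, m2 ≥ 0, 0 < q3 < k1 + k2, 0 < q4 < k1·k2 such that k1·k2·(k1+k2) − k1·k2·q3 − q4·(k1+k2) = 1 and q4 = k1·m1 + q1 = k2·m2 + q2. -/
/-!
The relation `k1 * k2 - k1 * q2 - k2 * q1 = 1` is a Bézout identity for `k1` and `k2`, so by the
Chinese remainder theorem there is exactly one `q4 ∈ [0, k1 * k2)` with `q4 ≡ q1 [ZMOD k1]` and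
`q4 ≡ q2 [ZMOD k2]`; it is positive because `0 < q1 < k1`, and it fixes `m1`, `m2`. The same
identity shows `k1 * k2 ∣ 1 + q4 * (k1 + k2)`, and the quotient `c` lies strictly between `0`
and `k1 + k2`, so `q3 = k1 + k2 - c` is the unique admissible value.
-/

theorem IsCoprime.existsUnique_modEq_modEq {a b : ℤ} (hab : IsCoprime a b) (hab_pos : 0 < a * b)
    (r s : ℤ) : ∃! x, 0 ≤ x ∧ x < a * b ∧ x ≡ r [ZMOD a] ∧ x ≡ s [ZMOD b] := by
  have ⟨u, v, huv⟩ := hab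
  set y := r * v * b + s * u * a
  have hy_a : y ≡ r [ZMOD a] := Int.modEq_iff_dvd.mpr ⟨(r - s) * u, by linear_combination -r * huv⟩
  have hy_b : y ≡ s [ZMOD b] := Int.modEq_iff_dvd.mpr ⟨(s - r) * v, by linear_combination -s * huv⟩
  have hx : y % (a * b) ≡ y [ZMOD a * b] := Int.mod_modEq y (a * b)
  have hx_a : y % (a * b) ≡ r [ZMOD a] := (hx.of_mul_right b).trans hy_a
  have hx_b : y % (a * b) ≡ s [ZMOD b] := (hx.of_mul_left a).trans hy_b
  refine ⟨y % (a * b), ⟨Int.emod_nonneg y hab_pos.ne', Int.emod_lt_of_pos y hab_pos, hx_a, hx_b⟩, ?_⟩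
  rintro x' ⟨hx'_nonneg, hx'_lt, hx'_a, hx'_b⟩
  have hmod : x' ≡ y % (a * b) [ZMOD a * b] :=
    Int.modEq_iff_dvd.mpr <| hab.mul_dvd (hx'_a.trans hx_a.symm).dvd (hx'_b.trans hx_b.symm).dvd
  rwa [Int.ModEq, Int.emod_eq_of_lt hx'_nonneg hx'_lt, Int.emod_emod_of_dvd _ dvd_rfl] at hmod

theorem isCoprime_of_mul_sub_mul_sub_mul_eq_one {k1 k2 q1 q2 : ℤ}
    (heq : k1 * k2 - k1 * q2 - k2 * q1 = 1) : IsCoprime k1 k2 :=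
  ⟨k2 - q2, -q1, by linear_combination heq⟩

theorem mul_dvd_one_add_mul_add {k1 k2 q1 q2 q4 : ℤ}
    (heq : k1 * k2 - k1 * q2 - k2 * q1 = 1) (h1 : q4 ≡ q1 [ZMOD k1]) (h2 : q4 ≡ q2 [ZMOD k2]) :
    k1 * k2 ∣ 1 + q4 * (k1 + k2) := by
  obtain ⟨m1, hm1⟩ := h1.symm.dvd
  obtain ⟨m2, hm2⟩ := h2.symm.dvd
  refine (isCoprime_of_mul_sub_mul_sub_mul_eq_one heq).mul_dvd
    ⟨k2 - q2 + k2 * m1 + q4, ?_⟩ ⟨k1 - q1 + k1 * m2 + q4, ?_⟩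
  · linear_combination -heq + k2 * hm1
  · linear_combination -heq + k1 * hm2

theorem stmt10_general (k1 k2 q1 q2 : ℤ) (hmin : 2 ≤ min k1 k2)
    (hq1 : 0 < q1) (hq1' : q1 < k1) (hq2' : q2 < k2)
    (heq : k1 * k2 - k1 * q2 - k2 * q1 = 1) :
    ∃! t : ℤ × ℤ × ℤ × ℤ,
      0 ≤ t.2.2.1 ∧ 0 ≤ t.2.2.2 ∧ 0 < t.1 ∧ t.1 < k1 + k2 ∧
      0 < t.2.1 ∧ t.2.1 < k1 * k2 ∧
      k1 * k2 * (k1 + k2) - k1 * k2 * t.1 - t.2.1 * (k1 + k2) = 1 ∧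
      t.2.1 = k1 * t.2.2.1 + q1 ∧ t.2.1 = k2 * t.2.2.2 + q2 := by
  obtain ⟨hk1, hk2⟩ := le_min_iff.mp hmin
  have hk : 0 < k1 * k2 := by positivity
  obtain ⟨q4, ⟨hq4_nonneg, hq4_lt, hq4_k1, hq4_k2⟩, hq4_unique⟩ :=
    (isCoprime_of_mul_sub_mul_sub_mul_eq_one heq).existsUnique_modEq_modEq hk q1 q2
  obtain ⟨m1, hm1⟩ := hq4_k1.symm.dvd
  obtain ⟨m2, hm2⟩ := hq4_k2.symm.dvd
  obtain ⟨c, hc⟩ := mul_dvd_one_add_mul_add heq hq4_k1 hq4_k2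
  have hm1_nonneg : 0 ≤ m1 := by nlinarith
  have hm2_nonneg : 0 ≤ m2 := by nlinarith
  have hq4_pos : 0 < q4 := by nlinarith
  have hc_pos : 0 < c := by nlinarith
  -- `q4 ≤ k1 * k2 - 1` gives `k1 * k2 * c ≤ 1 + (k1 * k2 - 1) * (k1 + k2) < k1 * k2 * (k1 + k2)`
  have hc_lt : c < k1 + k2 := by nlinarith
  refine ⟨(k1 + k2 - c, q4, m1, m2), ⟨hm1_nonneg, hm2_nonneg, by omega, by omega, hq4_pos, hq4_lt,
    by linear_combination -hc, by linear_combination hm1, by linear_combination hm2⟩, ?_⟩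
  rintro ⟨q3', q4', m1', m2'⟩ ⟨-, -, -, -, hq4'_pos, hq4'_lt, hq3', hm1', hm2'⟩
  obtain rfl : q4' = q4 := hq4_unique q4' ⟨hq4'_pos.le, hq4'_lt,
    Int.modEq_iff_dvd.mpr ⟨-m1', by linear_combination -hm1'⟩,
    Int.modEq_iff_dvd.mpr ⟨-m2', by linear_combination -hm2'⟩⟩
  obtain rfl : m1' = m1 := mul_left_cancel₀ (by omega : k1 ≠ 0) (by linear_combination hm1 - hm1')
  obtain rfl : m2' = m2 := mul_left_cancel₀ (by omega : k2 ≠ 0) (by linear_combination hm2 - hm2')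
  obtain rfl : q3' = k1 + k2 - c := mul_left_cancel₀ hk.ne' (by linear_combination -hq3' - hc)
  rfl

theorem stmt10 (k1 k2 q1 q2 : ℤ) (hmin : 2 ≤ min k1 k2)
    (hq1 : 0 < q1) (hq1' : q1 < k1) (hq2 : 0 < q2) (hq2' : q2 < k2)
    (heq : k1 * k2 - k1 * q2 - k2 * q1 = 1) :
    ∃! t : ℤ × ℤ × ℤ × ℤ,
      0 ≤ t.2.2.1 ∧ 0 ≤ t.2.2.2 ∧ 0 < t.1 ∧ t.1 < k1 + k2 ∧
      0 < t.2.1 ∧ t.2.1 < k1 * k2 ∧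
      k1 * k2 * (k1 + k2) - k1 * k2 * t.1 - t.2.1 * (k1 + k2) = 1 ∧
      t.2.1 = k1 * t.2.2.1 + q1 ∧ t.2.1 = k2 * t.2.2.2 + q2 :=
  stmt10_general k1 k2 q1 q2 hmin hq1 hq1' hq2' heq
end

section
/- Let d ≥ 2, let g1 and g2 be permutations of a set with d elements such that g2 is a transposition and g1 and g2 together generate the full symmetric group on the d elements. Then the number of orbits of the cyclic group generated by g1 is at most 2. Moreover, if this number of orbits equals 2, then the product g1·g2 is a cycle of length d (a single cycle whose support is the whole set), and if it equals 1 (i.e., g1 is a d-cycle), then the cyclic group generated by g2·g1 has exactly 2 orbits. -/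
/-!
Let `g₂ = swap a b`. The set of points lying in the `⟨g⟩`-orbit of `a` or of `b` is invariant
under `g` and under `swap a b`; when these generate the symmetric group it is everything, so `g`
has at most two orbits. The same holds for `g * swap a b` and `swap a b * g`, which generate the
same group together with `swap a b`. Multiplying by `swap a b` merges two different orbits
containing `a` and `b`, which gives the case of two orbits; in the case of one orbit, `g` and
`swap a b * g` have opposite signs, so they cannot both be cycles with full support.
-/

/-- The number of orbits of the cyclic group generated by the permutation `g`:
    the number of equivalence classes of the relation `y = g^m x` (`m : ℤ`),
    i.e. of the relation `Equiv.Perm.SameCycle g`. -/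
noncomputable def orbitCount {α : Type*} (g : Equiv.Perm α) : ℕ :=
  (Set.range fun x => {y | g.SameCycle x y}).ncard

open Equiv Equiv.Perm

section Closure

variable {G : Type*} [Group G]

theorem Subgroup.closure_pair_mul_right_eq (g h : G) :
    Subgroup.closure {g * h, h} = Subgroup.closure {g, h} := by
  have hg : g ∈ Subgroup.closure {g * h, h} := by
    have hgh : g * h ∈ Subgroup.closure {g * h, h} := Subgroup.subset_closure (by simp)
    have hh : h ∈ Subgroup.closure {g * h, h} := Subgroup.subset_closure (by simp)
    simpa using mul_mem hgh (inv_mem hh)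
  refine le_antisymm ((Subgroup.closure_le _).2 (Set.pair_subset ?_ ?_))
    ((Subgroup.closure_le _).2 (Set.pair_subset hg (Subgroup.subset_closure (by simp))))
  · exact mul_mem (Subgroup.subset_closure (by simp)) (Subgroup.subset_closure (by simp))
  · exact Subgroup.subset_closure (by simp)

theorem Subgroup.closure_pair_mul_left_eq (g h : G) :
    Subgroup.closure {h * g, h} = Subgroup.closure {g, h} := by
  have hg : g ∈ Subgroup.closure {h * g, h} := by
    have hh : h ∈ Subgroup.closure {h * g, h} := Subgroup.subset_closure (by simp)
    have hhg : h * g ∈ Subgroup.closure {h * g, h} := Subgroup.subset_closure (by simp)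
    simpa using mul_mem (inv_mem hh) hhg
  refine le_antisymm ((Subgroup.closure_le _).2 (Set.pair_subset ?_ ?_))
    ((Subgroup.closure_le _).2 (Set.pair_subset hg (Subgroup.subset_closure (by simp))))
  · exact mul_mem (Subgroup.subset_closure (by simp)) (Subgroup.subset_closure (by simp))
  · exact Subgroup.subset_closure (by simp)

end Closure

namespace Equiv.Perm

variable {α : Type*} [DecidableEq α]

theorem mem_of_closure_eq_top {s : Set (Perm α)} (hs : Subgroup.closure s = ⊤) {S : Set α}
    (hS : ∀ g ∈ s, ∀ x, g x ∈ S ↔ x ∈ S) (hne : S.Nonempty) (y : α) : y ∈ S := by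
  have hinv (g : Perm α) : ∀ x, g x ∈ S ↔ x ∈ S := by
    have hg : g ∈ Subgroup.closure s := hs ▸ Subgroup.mem_top g
    induction hg using Subgroup.closure_induction with
    | mem g hg => exact hS g hg
    | one => simp
    | mul g h _ _ hg hh => exact fun x => (hg (h x)).trans (hh x)
    | inv g _ hg => exact fun x => by simpa using (hg (g⁻¹ x)).symm
  obtain ⟨c, hc⟩ := hne
  simpa using (hinv (swap c y) c).2 hc

theorem sameCycle_or_sameCycle_of_closure_eq_top {g : Perm α} {a b : α}
    (h : Subgroup.closure {g, swap a b} = ⊤) (y : α) : g.SameCycle a y ∨ g.SameCycle b y := by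
  refine mem_of_closure_eq_top h (S := {y | g.SameCycle a y ∨ g.SameCycle b y}) ?_
    ⟨a, Or.inl (SameCycle.refl g a)⟩ y
  rintro _ (rfl | rfl) x
  · exact or_congr sameCycle_apply_right sameCycle_apply_right
  · simp only [Set.mem_ofPred_eq, swap_apply_def]
    split_ifs <;> simp_all [SameCycle.refl]

theorem sameCycle_mul_swap_of_not_sameCycle [Finite α] {σ : Perm α} {a b : α}
    (h : ¬σ.SameCycle a b) : (σ * swap a b).SameCycle a b := by
  by_contra hab
  set π := σ * swap a b
  -- Starting from `π b = σ a`, `π` agrees with `σ` along the `σ`-orbit of `a` until it is back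
  -- at `a`.
  have hpow (k : ℕ) : π.SameCycle b ((σ ^ (k + 1)) a) := by
    induction k with
    | zero => simpa [π] using (SameCycle.refl π b).apply_right
    | succ k ih =>
      have hna : (σ ^ (k + 1)) a ≠ a := fun he => hab (he ▸ ih).symm
      have hnb : (σ ^ (k + 1)) a ≠ b :=
        fun he => h (he ▸ sameCycle_pow_right.2 (SameCycle.refl σ a))
      have hstep : (σ ^ (k + 2)) a = π ((σ ^ (k + 1)) a) := by
        rw [pow_succ', mul_apply, coe_mul, Function.comp_apply, swap_apply_of_ne_of_ne hna hnb]
      rw [hstep]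
      exact ih.apply_right
  obtain ⟨n, hn⟩ := Nat.exists_eq_add_one.2 (orderOf_pos σ)
  have hperiod : σ ^ (n + 1) = 1 := hn ▸ pow_orderOf_eq_one σ
  exact hab (by simpa [hperiod] using (hpow n).symm)

theorem isCycle_and_support_eq_univ_of_forall_sameCycle [Fintype α] [Nontrivial α]
    {g : Perm α} {a : α} (h : ∀ y, g.SameCycle a y) :
    g.IsCycle ∧ g.support = Finset.univ := by
  have hmoved (y : α) : g y ≠ y := by
    intro hy
    obtain ⟨z, hz⟩ := exists_ne y
    obtain ⟨n, hn⟩ := (h y).symm.trans (h z)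
    exact hz (by rw [← hn, zpow_apply_eq_self_of_apply_eq_self hy])
  exact ⟨⟨a, hmoved a, fun y _ => h y⟩,
    Finset.eq_univ_of_forall fun y => mem_support.2 (hmoved y)⟩

theorem sign_eq_of_forall_sameCycle [Fintype α] [Nontrivial α] {g : Perm α} {a : α}
    (h : ∀ y, g.SameCycle a y) : sign g = -(-1) ^ Fintype.card α := by
  obtain ⟨hcycle, hsupport⟩ := isCycle_and_support_eq_univ_of_forall_sameCycle h
  rw [hcycle.sign, hsupport, Finset.card_univ]

end Equiv.Perm

section OrbitCount

variable {α : Type*} {g : Perm α} {a b : α}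

theorem setOf_sameCycle_eq_iff {x y : α} :
    {z | g.SameCycle x z} = {z | g.SameCycle y z} ↔ g.SameCycle x y := by
  refine ⟨fun h => ?_, fun h => Set.ext fun z => ⟨h.symm.trans, h.trans⟩⟩
  have : y ∈ {z | g.SameCycle y z} := SameCycle.refl g y
  rwa [← h] at this

theorem forall_sameCycle_of_sameCycle_or (hcover : ∀ y, g.SameCycle a y ∨ g.SameCycle b y)
    (hab : g.SameCycle a b) (y : α) : g.SameCycle a y :=
  (hcover y).elim id hab.trans

theorem range_setOf_sameCycle_eq_pair (hcover : ∀ y, g.SameCycle a y ∨ g.SameCycle b y) :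
    Set.range (fun x => {y | g.SameCycle x y}) =
      {{y | g.SameCycle a y}, {y | g.SameCycle b y}} := by
  refine Set.Subset.antisymm ?_ (Set.pair_subset ⟨a, rfl⟩ ⟨b, rfl⟩)
  rintro _ ⟨x, rfl⟩
  exact (hcover x).imp (fun h => (setOf_sameCycle_eq_iff.2 h).symm)
    (fun h => (setOf_sameCycle_eq_iff.2 h).symm)

theorem orbitCount_le_two (hcover : ∀ y, g.SameCycle a y ∨ g.SameCycle b y) :
    orbitCount g ≤ 2 := by
  rw [orbitCount, range_setOf_sameCycle_eq_pair hcover]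
  exact (Set.ncard_insert_le _ _).trans (by simp)

theorem orbitCount_eq_two_iff (hcover : ∀ y, g.SameCycle a y ∨ g.SameCycle b y) :
    orbitCount g = 2 ↔ ¬g.SameCycle a b := by
  rw [orbitCount, range_setOf_sameCycle_eq_pair hcover]
  by_cases hab : g.SameCycle a b
  · simp [setOf_sameCycle_eq_iff.2 hab, hab]
  · simp [Set.ncard_pair (mt setOf_sameCycle_eq_iff.1 hab), hab]

end OrbitCount

theorem stmt16_general {α : Type*} [Fintype α] [DecidableEq α]
    (g1 g2 : Equiv.Perm α) (hswap : g2.IsSwap)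
    (hgen : Subgroup.closure {g1, g2} = (⊤ : Subgroup (Equiv.Perm α))) :
    orbitCount g1 ≤ 2 ∧
    (orbitCount g1 = 2 → (g1 * g2).IsCycle ∧ (g1 * g2).support = Finset.univ) ∧
    (orbitCount g1 = 1 → orbitCount (g2 * g1) = 2) := by
  obtain ⟨a, b, hab, rfl⟩ := hswap
  have : Nontrivial α := ⟨a, b, hab⟩
  have hcover := sameCycle_or_sameCycle_of_closure_eq_top hgen
  have hcover_mul := sameCycle_or_sameCycle_of_closure_eq_top
    ((Subgroup.closure_pair_mul_right_eq g1 (swap a b)).trans hgen)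
  have hcover_swap_mul := sameCycle_or_sameCycle_of_closure_eq_top
    ((Subgroup.closure_pair_mul_left_eq g1 (swap a b)).trans hgen)
  refine ⟨orbitCount_le_two hcover, fun h2 => ?_, fun h1 => ?_⟩
  · have hmerge := sameCycle_mul_swap_of_not_sameCycle ((orbitCount_eq_two_iff hcover).1 h2)
    exact isCycle_and_support_eq_univ_of_forall_sameCycle
      (forall_sameCycle_of_sameCycle_or hcover_mul hmerge)
  · refine (orbitCount_eq_two_iff hcover_swap_mul).2 fun hsc => ?_
    have hsc1 : g1.SameCycle a b := not_not.1 ((orbitCount_eq_two_iff hcover).not.1 (by omega))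
    have hsign := sign_eq_of_forall_sameCycle (forall_sameCycle_of_sameCycle_or hcover_swap_mul hsc)
    rw [Perm.sign_mul, sign_swap hab, sign_eq_of_forall_sameCycle
      (forall_sameCycle_of_sameCycle_or hcover hsc1), neg_one_mul, neg_neg] at hsign
    exact units_ne_neg_self _ hsign

theorem stmt16 {α : Type*} [Fintype α] [DecidableEq α] (d : ℕ) (hd : 2 ≤ d)
    (hcard : Fintype.card α = d) (g1 g2 : Equiv.Perm α) (hswap : g2.IsSwap)
    (hgen : Subgroup.closure {g1, g2} = (⊤ : Subgroup (Equiv.Perm α))) :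
    orbitCount g1 ≤ 2 ∧
    (orbitCount g1 = 2 → (g1 * g2).IsCycle ∧ (g1 * g2).support = Finset.univ) ∧
    (orbitCount g1 = 1 → orbitCount (g2 * g1) = 2) :=
  stmt16_general g1 g2 hswap hgen
end

section
/- Let α, β : ℤ⁴ → ℤ⁴ be the maps α(k1,k2,q1,q2) = (k1+k2, k2, k2+q1−q2, q2) and β(k1,k2,q1,q2) = (k1+k2, k1, k1+q2−q1, q1). The smallest subset of ℤ⁴ containing (1,1,0,0) and closed under α and β is exactly the set of integer quadruples (k1,k2,q1,q2) with k1 ≥ k2 ≥ 1, 0 ≤ q1 < k1, 0 ≤ q2 < k2 and k1·k2 − k1·q2 − k2·q1 = 1. -/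
/-- The map `α(k1,k2,q1,q2) = (k1+k2, k2, k2+q1−q2, q2)`. -/
def alphaMap : ℤ × ℤ × ℤ × ℤ → ℤ × ℤ × ℤ × ℤ :=
  fun s => (s.1 + s.2.1, s.2.1, s.2.1 + s.2.2.1 - s.2.2.2, s.2.2.2)

/-- The map `β(k1,k2,q1,q2) = (k1+k2, k1, k1+q2−q1, q1)`. -/
def betaMap : ℤ × ℤ × ℤ × ℤ → ℤ × ℤ × ℤ × ℤ :=
  fun s => (s.1 + s.2.1, s.1, s.1 + s.2.2.2 - s.2.2.1, s.2.2.1)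

private lemma key : ∀ n : ℕ, ∀ k1 k2 q1 q2 : ℤ,
    k2 ≤ k1 → 1 ≤ k2 → 0 ≤ q1 → q1 < k1 → 0 ≤ q2 → q2 < k2 →
    k1 * k2 - k1 * q2 - k2 * q1 = 1 → k1 + k2 ≤ (n : ℤ) →
    ∀ S : Set (ℤ × ℤ × ℤ × ℤ), (1, 1, 0, 0) ∈ S →
      (∀ s ∈ S, alphaMap s ∈ S) → (∀ s ∈ S, betaMap s ∈ S) →
      (k1, k2, q1, q2) ∈ S := by
  intro n
  induction n with
  | zero =>
    intro k1 k2 q1 q2 h1 h2 _ _ _ _ _ hn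
    exfalso; push_cast at hn; linarith
  | succ n ih =>
    intro k1 k2 q1 q2 h1 h2 hq1 hq1' hq2 hq2' hdet hn S hbase hα hβ
    rcases eq_or_lt_of_le h1 with heq | hlt
    · -- k1 = k2, forces (1,1,0,0)
      subst heq
      have hm : 1 ≤ k2 - q1 - q2 := by nlinarith
      have hk : k2 = 1 := by nlinarith
      have hq1z : q1 = 0 := by omega
      have hq2z : q2 = 0 := by omega
      rw [hk, hq1z, hq2z]; exact hbase
    · -- k2 < k1
      have hr0 : 0 ≤ q1 + q2 - k2 := by
        by_contra h
        push_neg at h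
        have h1' : q1 ≤ k2 - q2 - 1 := by omega
        nlinarith [mul_le_mul_of_nonneg_left h1' (by linarith : (0:ℤ) ≤ k2),
          mul_le_mul_of_nonneg_right hlt.le (by linarith : (0:ℤ) ≤ k2 - q2)]
      have hra : q1 + q2 - k2 < k1 - k2 := by
        by_contra h
        push_neg at h
        have h1' : k1 - q1 ≤ q2 := by omega
        nlinarith [mul_le_mul_of_nonneg_left h1' (by linarith : (0:ℤ) ≤ k2),
          mul_le_mul_of_nonneg_left hlt.le hq2]
      have hsum : (k1 - k2) + k2 ≤ (n : ℤ) := by push_cast at hn ⊢; omega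
      rcases le_or_gt k2 (k1 - k2) with hcase | hcase
      · -- alpha preimage
        have hmem := ih (k1 - k2) k2 (q1 + q2 - k2) q2 hcase h2 hr0 (by omega) hq2 hq2'
          (by linear_combination hdet) hsum S hbase hα hβ
        have := hα _ hmem
        have heq2 : alphaMap (k1 - k2, k2, q1 + q2 - k2, q2) = (k1, k2, q1, q2) := by
          simp only [alphaMap, Prod.mk.injEq]
          exact ⟨by ring, trivial, by ring, trivial⟩
        rwa [heq2] at this
      · -- beta preimage
        have hmem := ih k2 (k1 - k2) q2 (q1 + q2 - k2) hcase.le (by omega) hq2 (by omega)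
          hr0 hra (by linear_combination hdet) (by linarith) S hbase hα hβ
        have := hβ _ hmem
        have heq2 : betaMap (k2, k1 - k2, q2, q1 + q2 - k2) = (k1, k2, q1, q2) := by
          simp only [betaMap, Prod.mk.injEq]
          exact ⟨by ring, trivial, by ring, trivial⟩
        rwa [heq2] at this

theorem stmt18 :
    ⋂₀ {S : Set (ℤ × ℤ × ℤ × ℤ) |
        (1, 1, 0, 0) ∈ S ∧ (∀ s ∈ S, alphaMap s ∈ S) ∧ (∀ s ∈ S, betaMap s ∈ S)} =
    {s : ℤ × ℤ × ℤ × ℤ | s.2.1 ≤ s.1 ∧ 1 ≤ s.2.1 ∧ 0 ≤ s.2.2.1 ∧ s.2.2.1 < s.1 ∧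
      0 ≤ s.2.2.2 ∧ s.2.2.2 < s.2.1 ∧
      s.1 * s.2.1 - s.1 * s.2.2.2 - s.2.1 * s.2.2.1 = 1} := by
  apply subset_antisymm
  · intro s hs
    apply hs
    refine ⟨⟨by norm_num, by norm_num, by norm_num, by norm_num, by norm_num, by norm_num, by norm_num⟩, ?_, ?_⟩
    · rintro ⟨k1, k2, q1, q2⟩ ⟨h1, h2, h3, h4, h5, h6, h7⟩
      simp only [alphaMap, Set.mem_setOf_eq] at *
      exact ⟨by linarith, by linarith, by linarith, by linarith, by linarith, by linarith,
        by linear_combination h7⟩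
    · rintro ⟨k1, k2, q1, q2⟩ ⟨h1, h2, h3, h4, h5, h6, h7⟩
      simp only [betaMap, Set.mem_setOf_eq] at *
      exact ⟨by linarith, by linarith, by linarith, by linarith, by linarith, by linarith,
        by linear_combination h7⟩
  · rintro ⟨k1, k2, q1, q2⟩ ⟨h1, h2, h3, h4, h5, h6, h7⟩ S ⟨hbase, hα, hβ⟩
    exact key (k1 + k2).toNat k1 k2 q1 q2 h1 h2 h3 h4 h5 h6 h7
      (by push_cast [Int.toNat_of_nonneg (by linarith : (0:ℤ) ≤ k1 + k2)]; linarith) S hbase hα hβ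
end
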